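/- The polynomial h(y) = (Π_{i=1}^m y_i) · Π_{1 ≤ i < j ≤ m}(y_i^2 - y_j^2) is harmonic on ℝ^m. -/

import Mathlib

open Finset

/-- The Euclidean Laplacian, as the sum of second derivatives in each coordinate. -/
noncomputable def laplacian {m : ℕ} (f : (Fin m → ℝ) → ℝ) (x : Fin m → ℝ) : ℝ :=
  ∑ i, iteratedDeriv 2 (fun s => f (Function.update x i s)) (x i)

/-!
With `z_j = -y_j ^ 2`, the product over pairs is the Vandermonde determinant `det V(z)`. Along the
`i`-th coordinate, cofactor expansion along row `i` writes `h` as `y_i ∑_k c_k z_i ^ k`, and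
`∂_i² (y_i z_i ^ k) = y_i · (-2k(2k+1)) z_i ^ (k-1)`. So `Δh = (∏ y_j) ∑_i det V_i`, where `V_i` is
`V` with its `i`-th row replaced by the `i`-th row of `V D`, for a strictly upper triangular `D`.
Expanding each `det V_i` along row `i` gives `∑_i det V_i = tr (adj V · V D) = det V · tr D = 0`.
-/

open Polynomial

namespace Matrix

variable {n R : Type*} [Fintype n] [DecidableEq n] [CommRing R]

theorem det_updateRow_eq_sum_adjugate_mul (M : Matrix n n R) (i : n) (r : n → R) :
    (M.updateRow i r).det = ∑ k, M.adjugate k i * r k := by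
  rw [← cramer_transpose_apply, cramer_eq_adjugate_mulVec, ← adjugate_transpose]
  rfl

theorem sum_det_updateRow_mul_apply (M D : Matrix n n R) :
    ∑ i, (M.updateRow i ((M * D) i)).det = M.det * D.trace := by
  simp_rw [det_updateRow_eq_sum_adjugate_mul]
  calc ∑ i, ∑ k, M.adjugate k i * (M * D) i k = (M.adjugate * (M * D)).trace := by
        rw [Finset.sum_comm]; rfl
    _ = M.det * D.trace := by
        rw [← Matrix.mul_assoc, adjugate_mul, smul_mul, Matrix.one_mul, trace_smul, smul_eq_mul]

theorem vandermonde_update {m : ℕ} (v : Fin m → R) (i : Fin m) (t : R) :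
    vandermonde (Function.update v i t) = (vandermonde v).updateRow i fun k => t ^ (k : ℕ) := by
  ext j k
  rcases eq_or_ne j i with rfl | hj <;> simp [updateRow_apply, *]

theorem sum_det_updateRow_vandermonde_eval_eq_zero {m : ℕ} (v : Fin m → R) (f : ℕ → R[X])
    (hf : ∀ k, (f k).degree < k) :
    ∑ i, ((vandermonde v).updateRow i fun k => (f k).eval (v i)).det = 0 := by
  set D : Matrix (Fin m) (Fin m) R := of fun j k => (f k).coeff j
  have hrow : ∀ i, (fun k : Fin m => (f k).eval (v i)) = (vandermonde v * D) i := by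
    intro i
    ext k
    have hdeg : (f k).natDegree < m := by
      rcases eq_or_ne (f k) 0 with h0 | h0
      · simpa [h0] using k.pos
      · exact (natDegree_lt_iff_degree_lt h0).2 ((hf k).trans (by exact_mod_cast k.is_lt))
    rw [eval_eq_sum_range' hdeg, ← Fin.sum_univ_eq_sum_range]
    simp [mul_apply, D, mul_comm]
  have htrace : D.trace = 0 := sum_eq_zero fun k _ => coeff_eq_zero_of_degree_lt (hf k)
  simp_rw [hrow, sum_det_updateRow_mul_apply, htrace, mul_zero]

theorem prod_sub_eq_det_vandermonde_neg {m : ℕ} (v : Fin m → R) :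
    ∏ p ∈ univ.filter fun p : Fin m × Fin m => p.1 < p.2, (v p.1 - v p.2) =
      (vandermonde fun j => -v j).det := by
  rw [det_vandermonde, prod_filter, Fintype.prod_prod_type]
  refine prod_congr rfl fun i _ => ?_
  rw [← prod_filter, filter_lt_eq_Ioi]
  exact prod_congr rfl fun j _ => (neg_sub_neg (v j) (v i)).symm

end Matrix

theorem iteratedDeriv_eval {𝕜 : Type*} [NontriviallyNormedField 𝕜] (p : 𝕜[X]) (n : ℕ) :
    iteratedDeriv n (fun s => p.eval s) = fun s => (derivative^[n] p).eval s := by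
  induction n with
  | zero => simp
  | succ n ih =>
    rw [iteratedDeriv_succ, ih, Function.iterate_succ_apply']
    exact funext fun s => Polynomial.deriv _

-- At `k = 0` the coefficient vanishes, so the truncated `k - 1` is harmless.
noncomputable def secondDerivOddPow (k : ℕ) : ℝ[X] := C (-(2 * k * (2 * k + 1) : ℝ)) * X ^ (k - 1)

theorem degree_secondDerivOddPow_lt (k : ℕ) : (secondDerivOddPow k).degree < k := by
  rcases k with _ | k
  · simp [secondDerivOddPow]
  · exact (degree_C_mul_X_pow_le _ _).trans_lt (by exact_mod_cast k.lt_succ_self)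

theorem eval_iterate_derivative_X_mul_neg_sq_pow (k : ℕ) (t : ℝ) :
    (derivative^[2] (X * (-X ^ 2) ^ k)).eval t = t * (secondDerivOddPow k).eval (-t ^ 2) := by
  have hmono : (X * (-X ^ 2) ^ k : ℝ[X]) = C ((-1) ^ k) * X ^ (2 * k + 1) := by
    rw [neg_pow, ← pow_mul, C_pow, C_neg, C_1]
    ring
  rw [hmono, iterate_derivative_C_mul, iterate_derivative_X_pow_eq_C_mul]
  rcases k with _ | k
  · simp [secondDerivOddPow]
  · rw [show 2 * (k + 1) + 1 - 2 = 2 * k + 1 by omega]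
    simp only [secondDerivOddPow, Nat.descFactorial, eval_mul, eval_pow, eval_neg, eval_one,
      eval_C, eval_X, eval_natCast, map_pow, map_neg, map_one, map_natCast]
    push_cast
    ring

open Matrix in
theorem iteratedDeriv_two_prod_mul_det_vandermonde_update {m : ℕ} (x : Fin m → ℝ) (i : Fin m) :
    iteratedDeriv 2 (fun s => (∏ j, Function.update x i s j) *
        (vandermonde fun j => -Function.update x i s j ^ 2).det) (x i) =
      (∏ j, x j) * ((vandermonde fun j => -x j ^ 2).updateRow i
        fun k => (secondDerivOddPow k).eval (-x i ^ 2)).det := by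
  set M := vandermonde fun j => -x j ^ 2
  have hpoly : (fun s => (∏ j, Function.update x i s j) *
      (vandermonde fun j => -Function.update x i s j ^ 2).det) = fun s =>
      (C (∏ j ∈ univ \ {i}, x j) * ∑ k, C (M.adjugate k i) * (X * (-X ^ 2) ^ (k : ℕ))).eval s := by
    funext s
    have hv : (fun j => -Function.update x i s j ^ 2) =
        Function.update (fun j => -x j ^ 2) i (-s ^ 2) := by
      funext j
      rcases eq_or_ne j i with rfl | h <;> simp [*]
    rw [hv, vandermonde_update, det_updateRow_eq_sum_adjugate_mul, prod_update_of_mem (mem_univ i)]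
    simp only [eval_mul, eval_C, eval_finsetSum, eval_X, eval_pow, eval_neg, mul_sum]
    exact sum_congr rfl fun k _ => by ring
  rw [hpoly, iteratedDeriv_eval, iterate_derivative_C_mul, iterate_derivative_sum,
    det_updateRow_eq_sum_adjugate_mul, prod_eq_mul_prod_sdiff_singleton_of_mem (mem_univ i)]
  simp only [iterate_derivative_C_mul, eval_mul, eval_C, eval_finsetSum,
    eval_iterate_derivative_X_mul_neg_sq_pow, mul_sum]
  exact sum_congr rfl fun k _ => by ring

/-- The polynomial `(∏ i, y i) * ∏_{i<j} (y i ^ 2 - y j ^ 2)` (the product of the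
type `B_m` positive roots) is harmonic. -/
theorem typeB_product_harmonic (m : ℕ) (x : Fin m → ℝ) :
    laplacian
      (fun y : Fin m → ℝ =>
        (∏ i, y i) *
          ∏ p ∈ Finset.univ.filter fun p : Fin m × Fin m => p.1 < p.2,
            (y p.1 ^ 2 - y p.2 ^ 2)) x = 0 := by
  simp only [laplacian, Matrix.prod_sub_eq_det_vandermonde_neg fun j => _ ^ 2]
  rw [sum_congr rfl fun i _ => iteratedDeriv_two_prod_mul_det_vandermonde_update x i, ← mul_sum,
    Matrix.sum_det_updateRow_vandermonde_eval_eq_zero _ _ degree_secondDerivOddPow_lt, mul_zero]
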